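/- arXiv:1907.02304 — 3 statements merged into one kernel-verified Lean document; each statement's English description precedes it below -/
import Mathlib

section
/- For every nonzero x ∈ ℝ³, the Oseen tensor matrix Φ(x) is symmetric and positive semidefinite, and its operator norm as a linear map on Euclidean ℝ³ equals 1/(4π‖x‖). -/
/-!
Write `Φ(x) = a • 1 + b • x xᵀ` with `a = (8π‖x‖)⁻¹` and `b = (8π‖x‖³)⁻¹`, both nonnegative: a
nonnegative combination of the identity and a Gram matrix is positive semidefinite (hence
symmetric over `ℝ`). As an operator on `ℝ³` it is `a • id + b • ⟪x, ·⟫ x`; the triangle inequality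
bounds its norm by `a + b‖x‖²`, and `x` is an eigenvector with exactly this eigenvalue, which
equals `(4π‖x‖)⁻¹`.
-/

/-- The Oseen tensor, as a real 3×3 matrix:
`Φ(x) = (1/(8π)) (‖x‖⁻¹ I + ‖x‖⁻³ x xᵀ)`. -/
noncomputable def oseenTensor (x : EuclideanSpace ℝ (Fin 3)) : Matrix (Fin 3) (Fin 3) ℝ :=
  (8 * Real.pi)⁻¹ • (‖x‖⁻¹ • (1 : Matrix (Fin 3) (Fin 3) ℝ) +
    (‖x‖ ^ 3)⁻¹ • Matrix.vecMulVec (fun i => x i) (fun i => x i))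

open Real Matrix InnerProductSpace

theorem ContinuousLinearMap.norm_le_opNorm_of_apply_eq_smul {𝕜 E : Type*}
    [NontriviallyNormedField 𝕜] [NormedAddCommGroup E] [NormedSpace 𝕜 E]
    {T : E →L[𝕜] E} {v : E} {c : 𝕜} (hv : v ≠ 0) (hTv : T v = c • v) : ‖c‖ ≤ ‖T‖ := by
  have h := T.le_opNorm v
  rw [hTv, norm_smul] at h
  exact le_of_mul_le_mul_right h (norm_pos_iff.mpr hv)

theorem norm_smul_id_add_smul_rankOne_self {E : Type*} [NormedAddCommGroup E]
    [InnerProductSpace ℝ E] {a b : ℝ} (ha : 0 ≤ a) (hb : 0 ≤ b) {v : E} (hv : v ≠ 0) :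
    ‖a • ContinuousLinearMap.id ℝ E + b • rankOne ℝ v v‖ = a + b * ‖v‖ ^ 2 := by
  apply le_antisymm
  · calc ‖a • ContinuousLinearMap.id ℝ E + b • rankOne ℝ v v‖
        ≤ ‖a • ContinuousLinearMap.id ℝ E‖ + ‖b • rankOne ℝ v v‖ := norm_add_le _ _
      _ ≤ a * 1 + b * ‖v‖ ^ 2 := by
          rw [norm_smul, norm_smul, norm_rankOne, Real.norm_of_nonneg ha,
            Real.norm_of_nonneg hb, ← sq]
          gcongr
          exact ContinuousLinearMap.norm_id_le
      _ = a + b * ‖v‖ ^ 2 := by rw [mul_one]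
  · have hTv : (a • ContinuousLinearMap.id ℝ E + b • rankOne ℝ v v) v = (a + b * ‖v‖ ^ 2) • v := by
      simp [add_smul, mul_smul]
    simpa [Real.norm_of_nonneg (by positivity : 0 ≤ a + b * ‖v‖ ^ 2)] using
      ContinuousLinearMap.norm_le_opNorm_of_apply_eq_smul hv hTv

theorem Matrix.posSemidef_smul_one_add_smul_vecMulVec_self_star {n R : Type*} [Fintype n]
    [DecidableEq n] [CommRing R] [PartialOrder R] [StarRing R] [StarOrderedRing R]
    {a b : R} (ha : 0 ≤ a) (hb : 0 ≤ b) (v : n → R) :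
    (a • 1 + b • vecMulVec v (star v)).PosSemidef :=
  (PosSemidef.one.smul ha).add ((posSemidef_vecMulVec_self_star v).smul hb)

theorem Matrix.toContinuousLinearMap_toEuclideanLin_smul_one_add_smul_vecMulVec {n : Type*}
    [Fintype n] [DecidableEq n] (a b : ℝ) (v : EuclideanSpace ℝ n) :
    LinearMap.toContinuousLinearMap (toEuclideanLin (a • 1 + b • vecMulVec v (star v))) =
      a • ContinuousLinearMap.id ℝ _ + b • rankOne ℝ v v := by
  rw [← symm_toEuclideanLin_rankOne]
  ext y i
  simp

theorem oseenTensor_eq (x : EuclideanSpace ℝ (Fin 3)) :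
    oseenTensor x = (8 * π * ‖x‖)⁻¹ • 1 + (8 * π * ‖x‖ ^ 3)⁻¹ • vecMulVec x (star x) := by
  rw [oseenTensor, star_trivial, smul_add, smul_smul, smul_smul, ← mul_inv, ← mul_inv]

/-- for every nonzero `x ∈ ℝ³`, the Oseen tensor matrix `Φ(x)` is symmetric,
positive semidefinite, and its operator norm as a linear map on Euclidean `ℝ³` equals
`1/(4π‖x‖)`. -/
theorem oseenTensor_isSymm_posSemidef_opNorm (x : EuclideanSpace ℝ (Fin 3)) (hx : x ≠ 0) :
    (oseenTensor x).IsSymm ∧ (oseenTensor x).PosSemidef ∧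
      ‖LinearMap.toContinuousLinearMap (Matrix.toEuclideanLin (oseenTensor x))‖
        = (4 * Real.pi * ‖x‖)⁻¹ := by
  have ha : 0 ≤ (8 * π * ‖x‖)⁻¹ := by positivity
  have hb : 0 ≤ (8 * π * ‖x‖ ^ 3)⁻¹ := by positivity
  have hpos : (oseenTensor x).PosSemidef :=
    oseenTensor_eq x ▸ posSemidef_smul_one_add_smul_vecMulVec_self_star ha hb _
  refine ⟨isHermitian_iff_isSymm.mp hpos.isHermitian, hpos, ?_⟩
  rw [oseenTensor_eq, toContinuousLinearMap_toEuclideanLin_smul_one_add_smul_vecMulVec,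
    norm_smul_id_add_smul_rankOne_self ha hb hx]
  have hr : ‖x‖ ≠ 0 := norm_ne_zero_iff.mpr hx
  field_simp
  ring
end

section
/- There exists a universal constant C > 0 such that the following holds. Assume in addition that 27·M·W³ ≤ 1 (equivalently 3W ≤ M^{−1/3}). Then for every real k ∈ [0,2] and every index i ∈ {1,…,N}: (1/N)·∑_{j≠i} ‖x_i − x_j‖^{−k} ≤ C·(M·W³·d_min^{−k} + M^{k/3}). -/
/-!
Each point `x j` carries mass `1/N` that `T` has moved by at most `W`, so a ball of radius
`r ≥ W` around `x i` contains at most `N M vol(B(0, 2r)) = O(N M r³)` of the points. The points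
within distance `W` of `x i` therefore contribute `O(N M W³) · d_min^{-k}`. The others are grouped
in dyadic shells `2^m W < ‖x i - x j‖ ≤ 2^{m+1} W` up to the scale `R = M^{-1/3}`, which exceeds
`W` because `27 M W³ ≤ 1`. Shell `m` contributes `O(N M (2^m W)^{3-k})`; since `3 - k ≥ 1` this
geometric sum is dominated by its last term `O(N M R^{3-k}) = O(N M^{k/3})`, and the at most `N`
points beyond `R` contribute at most `N R^{-k} = N M^{k/3}`.
-/

open MeasureTheory Metric Finset
open scoped ENNReal NNReal

abbrev E3 : Type := EuclideanSpace ℝ (Fin 3)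

theorem inv_smul_sum_dirac_apply {E : Type*} [MeasurableSpace E] {N : ℕ} (x : Fin N → E)
    {S : Set E} [DecidablePred (· ∈ S)] (hS : MeasurableSet S) :
    ((N : ℝ≥0∞)⁻¹ • ∑ j, Measure.dirac (x j)) S = (N : ℝ≥0∞)⁻¹ * #{j | x j ∈ S} := by
  simp [Measure.finsetSum_apply, Measure.dirac_apply' _ hS, Set.indicator_apply, sum_boole]

theorem measure_preimage_closedBall_le {E : Type*} [SeminormedAddCommGroup E] [MeasurableSpace E]
    {μ : Measure E} {T : E → E} {W : ℝ} (hT : ∀ᵐ y ∂μ, ‖T y - y‖ ≤ W) (c : E) (r : ℝ) :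
    μ (T ⁻¹' closedBall c r) ≤ μ (closedBall c (r + W)) := by
  refine measure_mono_ae ?_
  filter_upwards [hT] with y hy hyr
  calc dist y c ≤ dist (T y) c + dist y (T y) := by rw [add_comm]; exact dist_triangle _ _ _
    _ ≤ r + W := add_le_add hyr (by rwa [dist_comm, dist_eq_norm])

section Counting

variable {E : Type*} [NormedAddCommGroup E] [NormedSpace ℝ E] [MeasurableSpace E] [BorelSpace E]
  [FiniteDimensional ℝ E] {μ ν : Measure E} [ν.IsAddHaarMeasure] {T : E → E} {N : ℕ}
  {x : Fin N → E} {M W r : ℝ}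

theorem card_norm_sub_le_le_of_map_eq (hN : N ≠ 0) (hM : 0 ≤ M)
    (hμν : ∀ A, μ A ≤ ENNReal.ofReal M * ν A) (hT : Measurable T)
    (hTW : ∀ᵐ y ∂μ, ‖T y - y‖ ≤ W) (hmap : μ.map T = (N : ℝ≥0∞)⁻¹ • ∑ j, Measure.dirac (x j))
    (c : E) (hrW : 0 ≤ r + W) :
    (#{j | ‖c - x j‖ ≤ r} : ℝ) ≤
      N * M * (r + W) ^ Module.finrank ℝ E * (ν (ball 0 1)).toReal := by
  classical
  have hball : (N : ℝ≥0∞)⁻¹ * #{j | x j ∈ closedBall c r} ≤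
      ENNReal.ofReal M * (ENNReal.ofReal ((r + W) ^ Module.finrank ℝ E) * ν (ball 0 1)) := by
    calc (N : ℝ≥0∞)⁻¹ * #{j | x j ∈ closedBall c r} = μ (T ⁻¹' closedBall c r) := by
          rw [← inv_smul_sum_dirac_apply x isClosed_closedBall.measurableSet, ← hmap,
            Measure.map_apply hT isClosed_closedBall.measurableSet]
      _ ≤ μ (closedBall c (r + W)) := measure_preimage_closedBall_le hTW c r
      _ ≤ _ := by rw [← ν.addHaar_closedBall c hrW]; exact hμν _
  rw [ENNReal.inv_mul_le_iff (by exact_mod_cast hN) (by simp)] at hball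
  have := ENNReal.toReal_mono (by finiteness) hball
  simp only [mem_closedBall, dist_eq_norm] at this
  simpa [norm_sub_rev, ENNReal.toReal_ofReal, hM, hrW, mul_assoc] using this

theorem card_norm_sub_le_le_of_map_eq_of_le (hN : N ≠ 0) (hM : 0 ≤ M)
    (hμν : ∀ A, μ A ≤ ENNReal.ofReal M * ν A) (hT : Measurable T)
    (hTW : ∀ᵐ y ∂μ, ‖T y - y‖ ≤ W) (hmap : μ.map T = (N : ℝ≥0∞)⁻¹ • ∑ j, Measure.dirac (x j))
    (c : E) (hW : 0 ≤ W) (hWr : W ≤ r) :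
    (#{j | ‖c - x j‖ ≤ r} : ℝ) ≤
      2 ^ Module.finrank ℝ E * N * M * (ν (ball 0 1)).toReal * r ^ Module.finrank ℝ E := by
  refine (card_norm_sub_le_le_of_map_eq hN hM hμν hT hTW hmap c (by linarith)).trans ?_
  calc N * M * (r + W) ^ Module.finrank ℝ E * (ν (ball 0 1)).toReal
      ≤ N * M * (2 * r) ^ Module.finrank ℝ E * (ν (ball 0 1)).toReal := by
        gcongr <;> linarith
    _ = _ := by ring

end Counting

section DyadicSum

variable {ι : Type*} (s : Finset ι) (f : ι → ℝ) {a b c k B d : ℝ}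

theorem sum_filter_Ioc_add_sum_filter_Ioc {M : Type*} [AddCommMonoid M] (g : ι → M)
    (hab : a ≤ b) (hbc : b ≤ c) :
    ∑ j ∈ s with a < f j ∧ f j ≤ b, g j + ∑ j ∈ s with b < f j ∧ f j ≤ c, g j =
      ∑ j ∈ s with a < f j ∧ f j ≤ c, g j := by
  rw [sum_filter, sum_filter, sum_filter, ← sum_add_distrib]
  refine sum_congr rfl fun j _ => ?_
  by_cases hb : f j ≤ b
  · simp [hb, hb.trans hbc, not_lt.2 hb]
  · simp [hb, hab.trans_lt (not_le.1 hb), not_le.1 hb]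

theorem sum_filter_Ioc_add_sum_filter_Ioi {M : Type*} [AddCommMonoid M] (g : ι → M)
    (hab : a ≤ b) :
    ∑ j ∈ s with a < f j ∧ f j ≤ b, g j + ∑ j ∈ s with b < f j, g j =
      ∑ j ∈ s with a < f j, g j := by
  rw [sum_filter, sum_filter, sum_filter, ← sum_add_distrib]
  refine sum_congr rfl fun j _ => ?_
  by_cases hb : f j ≤ b
  · simp [hb, not_lt.2 hb]
  · simp [hb, hab.trans_lt (not_le.1 hb), not_le.1 hb]

theorem sum_rpow_neg_le_card_mul (hc : 0 < c) (hk : 0 ≤ k) (h : ∀ j ∈ s, c ≤ f j) :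
    ∑ j ∈ s, f j ^ (-k) ≤ #s * c ^ (-k) := by
  simpa using sum_le_card_nsmul s _ _ fun j hj =>
    Real.rpow_le_rpow_of_nonpos hc (h j hj) (neg_nonpos.2 hk)

variable {s f}

theorem sum_filter_Ioc_two_mul_rpow_neg_le {ρ : ℝ} (hρ : 0 < ρ) (hk : 0 ≤ k)
    (hcount : (#{j ∈ s | f j ≤ 2 * ρ} : ℝ) ≤ B * (2 * ρ) ^ d) :
    ∑ j ∈ s with ρ < f j ∧ f j ≤ 2 * ρ, f j ^ (-k) ≤ 2 ^ d * B * ρ ^ (d - k) :=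
  calc ∑ j ∈ s with ρ < f j ∧ f j ≤ 2 * ρ, f j ^ (-k)
      ≤ #{j ∈ s | ρ < f j ∧ f j ≤ 2 * ρ} * ρ ^ (-k) :=
        sum_rpow_neg_le_card_mul _ f hρ hk fun j hj => (mem_filter.1 hj).2.1.le
    _ ≤ #{j ∈ s | f j ≤ 2 * ρ} * ρ ^ (-k) := by
        gcongr
        exact fun h => h.2
    _ ≤ B * (2 * ρ) ^ d * ρ ^ (-k) := by gcongr
    _ = 2 ^ d * B * ρ ^ (d - k) := by
        rw [Real.mul_rpow zero_le_two hρ.le, sub_eq_add_neg, Real.rpow_add hρ]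
        ring

theorem sum_filter_Ioc_two_pow_rpow_neg_le (ha : 0 < a) (hk : 0 ≤ k) (hdk : 1 ≤ d - k)
    (hB : 0 ≤ B) (hcount : ∀ r, a ≤ r → (#{j ∈ s | f j ≤ r} : ℝ) ≤ B * r ^ d) (n : ℕ) :
    ∑ j ∈ s with a < f j ∧ f j ≤ 2 ^ n * a, f j ^ (-k) ≤ 2 ^ d * B * (2 ^ n * a) ^ (d - k) := by
  induction n with
  | zero =>
    rw [pow_zero, one_mul, filter_false_of_mem fun j _ h => h.1.not_ge h.2, sum_empty]
    positivity
  | succ n ih =>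
    set ρ : ℝ := 2 ^ n * a
    have hρ : 0 < ρ := by positivity
    have haρ : a ≤ ρ := le_mul_of_one_le_left ha.le (one_le_pow₀ one_le_two)
    -- The new shell costs as much as the bound for all earlier ones; `d - k ≥ 1` absorbs this.
    have htwo : (2 : ℝ) ≤ 2 ^ (d - k) := by
      simpa using Real.rpow_le_rpow_of_exponent_le one_le_two hdk
    calc ∑ j ∈ s with a < f j ∧ f j ≤ 2 ^ (n + 1) * a, f j ^ (-k)
        = ∑ j ∈ s with a < f j ∧ f j ≤ ρ, f j ^ (-k)
          + ∑ j ∈ s with ρ < f j ∧ f j ≤ 2 * ρ, f j ^ (-k) := by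
          rw [sum_filter_Ioc_add_sum_filter_Ioc s f _ haρ (by linarith), pow_succ',
            mul_assoc (2 : ℝ)]
      _ ≤ 2 ^ d * B * ρ ^ (d - k) + 2 ^ d * B * ρ ^ (d - k) :=
          add_le_add ih (sum_filter_Ioc_two_mul_rpow_neg_le hρ hk (hcount _ (by linarith)))
      _ ≤ 2 ^ d * B * (2 * ρ) ^ (d - k) := by
          rw [Real.mul_rpow zero_le_two hρ.le]
          have : 0 ≤ 2 ^ d * B * ρ ^ (d - k) := by positivity
          nlinarith
      _ = _ := by rw [pow_succ', mul_assoc (2 : ℝ)]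

theorem sum_filter_lt_rpow_neg_le {R : ℝ} (ha : 0 < a) (haR : a ≤ R) (hk : 0 ≤ k)
    (hdk : 1 ≤ d - k) (hB : 0 ≤ B)
    (hcount : ∀ r, a ≤ r → (#{j ∈ s | f j ≤ r} : ℝ) ≤ B * r ^ d) :
    ∑ j ∈ s with a < f j, f j ^ (-k) ≤ 2 ^ d * B * (2 * R) ^ (d - k) + #s * R ^ (-k) := by
  obtain ⟨n, hnR, hRn⟩ := exists_nat_pow_near ((one_le_div ha).2 haR) one_lt_two
  rw [le_div_iff₀ ha] at hnR
  rw [div_lt_iff₀ ha] at hRn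
  have hR : 0 < R := ha.trans_le haR
  have haρ : a ≤ 2 ^ (n + 1) * a := le_mul_of_one_le_left ha.le (one_le_pow₀ one_le_two)
  rw [← sum_filter_Ioc_add_sum_filter_Ioi s f _ haρ]
  gcongr
  · refine (sum_filter_Ioc_two_pow_rpow_neg_le ha hk hdk hB hcount (n + 1)).trans ?_
    have hρR : 2 ^ (n + 1) * a ≤ 2 * R := by rw [pow_succ', mul_assoc]; linarith
    exact mul_le_mul_of_nonneg_left (Real.rpow_le_rpow (by positivity) hρR (by linarith))
      (by positivity)
  · calc ∑ j ∈ s with 2 ^ (n + 1) * a < f j, f j ^ (-k)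
        ≤ #{j ∈ s | 2 ^ (n + 1) * a < f j} * R ^ (-k) :=
          sum_rpow_neg_le_card_mul _ f hR hk fun j hj => hRn.le.trans (mem_filter.1 hj).2.le
      _ ≤ #s * R ^ (-k) := by
          gcongr
          exact filter_subset _ _

theorem sum_rpow_neg_le_of_card_filter_le {δ R : ℝ} (hδ : 0 < δ) (hδf : ∀ j ∈ s, δ ≤ f j)
    (ha : 0 < a) (haR : a ≤ R) (hk : 0 ≤ k) (hdk : 1 ≤ d - k) (hB : 0 ≤ B)
    (hcount : ∀ r, a ≤ r → (#{j ∈ s | f j ≤ r} : ℝ) ≤ B * r ^ d) :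
    ∑ j ∈ s, f j ^ (-k) ≤
      B * a ^ d * δ ^ (-k) + 2 ^ d * B * (2 * R) ^ (d - k) + #s * R ^ (-k) := by
  rw [← sum_filter_add_sum_filter_not s (fun j => f j ≤ a), add_assoc]
  simp only [not_le]
  gcongr
  · calc ∑ j ∈ s with f j ≤ a, f j ^ (-k)
        ≤ #{j ∈ s | f j ≤ a} * δ ^ (-k) :=
          sum_rpow_neg_le_card_mul _ f hδ hk fun j hj => hδf j (mem_filter.1 hj).1
      _ ≤ B * a ^ d * δ ^ (-k) := by gcongr; exact hcount a le_rfl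
  · exact sum_filter_lt_rpow_neg_le ha haR hk hdk hB hcount

end DyadicSum

section Scale

variable {M : ℝ} (hM : 0 < M)
include hM

theorem le_rpow_neg_one_div_three_of_mul_pow_three_le_one {W : ℝ} (h : M * W ^ 3 ≤ 1) :
    W ≤ M ^ (-(1 / 3 : ℝ)) := by
  refine le_of_pow_le_pow_left₀ three_ne_zero (by positivity) ?_
  rw [← Real.rpow_natCast (M ^ _), ← Real.rpow_mul hM.le]
  norm_num [Real.rpow_neg_one]
  rwa [← one_div, le_div_iff₀ hM, mul_comm]

theorem mul_two_mul_rpow_neg_one_div_three_rpow_le {k : ℝ} (hk : 0 ≤ k) :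
    M * (2 * M ^ (-(1 / 3 : ℝ))) ^ (3 - k) ≤ 8 * M ^ (k / 3) := by
  have hMk : M * (M ^ (-(1 / 3 : ℝ))) ^ (3 - k) = M ^ (k / 3) := by
    rw [← Real.rpow_mul hM.le]
    nth_rw 1 [← Real.rpow_one M]
    rw [← Real.rpow_add hM]
    ring_nf
  have h2 : (2 : ℝ) ^ (3 - k) ≤ 8 :=
    (Real.rpow_le_rpow_of_exponent_le one_le_two (by linarith : 3 - k ≤ 3)).trans_eq (by norm_num)
  rw [Real.mul_rpow zero_le_two (by positivity), mul_left_comm, hMk]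
  gcongr

end Scale

/-- there is a universal constant `C > 0` such that for any `N ≥ 2`,
`M, W > 0`, any probability measure `μ` on `ℝ³` with density bounded by `M`, any
measurable transport map `T` with `‖T(y) − y‖ ≤ W` μ-a.e. pushing `μ` to the empirical
measure of points `x₁, …, x_N` whose minimal pairwise distance `d_min` is positive, if
`27 M W³ ≤ 1` then for every `k ∈ [0,2]` and every `i`,
`(1/N) ∑_{j≠i} ‖x_i − x_j‖^{−k} ≤ C (M W³ d_min^{−k} + M^{k/3})`. -/
theorem discrete_sum_inv_dist_pow_le :
    ∃ C : ℝ, 0 < C ∧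
      ∀ (N : ℕ) (M W : ℝ) (μ : Measure E3) (T : E3 → E3) (x : Fin N → E3) (dmin : ℝ),
        2 ≤ N → 0 < M → 0 < W →
        IsProbabilityMeasure μ →
        (∀ A : Set E3, μ A ≤ ENNReal.ofReal M * volume A) →
        Measurable T →
        (∀ᵐ y ∂μ, ‖T y - y‖ ≤ W) →
        μ.map T = (N : ℝ≥0∞)⁻¹ • ∑ j : Fin N, Measure.dirac (x j) →
        dmin = sInf {d : ℝ | ∃ i j : Fin N, i ≠ j ∧ d = ‖x i - x j‖} →
        0 < dmin →
        27 * M * W ^ 3 ≤ 1 →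
        ∀ k : ℝ, 0 ≤ k → k ≤ 2 → ∀ i : Fin N,
          (N : ℝ)⁻¹ * ∑ j ∈ Finset.univ.filter (fun j => j ≠ i), ‖x i - x j‖ ^ (-k)
            ≤ C * (M * W ^ 3 * dmin ^ (-k) + M ^ (k / 3)) := by
  set v := (volume (ball (0 : E3) 1)).toReal
  -- `512 = 8³`: one factor `8` each from `r + W ≤ 2 r`, from the dyadic doubling of the shells,
  -- and from `(2 R) ^ (3 - k) ≤ 8 R ^ (3 - k)`.
  refine ⟨512 * v + 1, by positivity, ?_⟩
  intro N M W μ T x dmin _ hM hW _ hμ hT hTW hmap hdmin hd0 h27 k hk0 hk2 i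
  have hN : (0 : ℝ) < N := Nat.cast_pos.2 i.pos
  have hdmin_le : ∀ j ∈ univ.filter (· ≠ i), dmin ≤ ‖x i - x j‖ := fun j hj =>
    hdmin ▸ csInf_le ⟨0, by rintro _ ⟨_, _, _, rfl⟩; positivity⟩
      ⟨i, j, (mem_filter.1 hj).2.symm, rfl⟩
  have hcount : ∀ r, W ≤ r →
      (#{j ∈ univ.filter (· ≠ i) | ‖x i - x j‖ ≤ r} : ℝ) ≤ 8 * N * M * v * r ^ (3 : ℝ) := by
    intro r hr
    have hball := card_norm_sub_le_le_of_map_eq_of_le i.pos.ne' hM.le hμ hT hTW hmap (x i) hW.le hr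
    rw [finrank_euclideanSpace_fin] at hball
    rw [Real.rpow_ofNat]
    refine (Nat.cast_le.2 (card_le_card (monotone_filter_left _ (filter_subset _ _)))).trans ?_
    linarith
  have hWR := le_rpow_neg_one_div_three_of_mul_pow_three_le_one hM (by nlinarith [pow_pos hW 3])
  have key := sum_rpow_neg_le_of_card_filter_le hd0 hdmin_le hW hWR hk0 (by linarith)
    (by positivity) hcount
  have hs : (#(univ.filter (· ≠ i)) : ℝ) ≤ N := by simpa using card_filter_le univ (· ≠ i)
  have hX : 0 ≤ M * W ^ 3 * dmin ^ (-k) := by positivity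
  rw [inv_mul_le_iff₀ hN]
  refine key.trans ?_
  rw [Real.rpow_ofNat, Real.rpow_ofNat, ← Real.rpow_mul hM.le, show -(1 / 3) * -k = k / 3 by ring]
  nlinarith [mul_le_mul_of_nonneg_left (mul_two_mul_rpow_neg_one_div_three_rpow_le hM hk0)
      (by positivity : (0 : ℝ) ≤ 64 * N * v),
    mul_le_mul_of_nonneg_right hs (by positivity : (0 : ℝ) ≤ M ^ (k / 3)),
    mul_nonneg (mul_nonneg hN.le (by positivity : (0 : ℝ) ≤ v)) hX, mul_nonneg hN.le hX]
end

section
/- Let s < t be real numbers, x ∈ ℝ³, and let X₁, X₂ : [s,t] → ℝ³ be differentiable with X_i'(τ) = b(F_i(τ, X_i(τ))) + u(τ, X_i(τ)) for all τ ∈ [s,t] and X₁(t) = X₂(t) = x. Then for every τ ∈ [s,t]: ‖X₁(τ) − X₂(τ)‖ ≤ (L_b·∫_τ^t sup_{z∈ℝ³} ‖F₁(σ,z) − F₂(σ,z)‖ dσ)·exp((L_b·L_F + L_u)·(t − τ)); i.e., the backward characteristic flows associated with two correlation fields F₁ and F₂ differ at most by the time-integrated uniform distance between F₁ and F₂, up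 to an exponential Gronwall factor. -/
open Set Filter Topology Real

section Gronwall

variable {E : Type*} [NormedAddCommGroup E] [NormedSpace ℝ E]
  {f f' : ℝ → E} {ε : ℝ → ℝ} {a b K δ : ℝ}

theorem hasDerivWithinAt_intervalIntegral_Ici_of_continuousOn
    (hε : ContinuousOn ε (Icc a b)) {x : ℝ} (hx : x ∈ Ico a b) :
    HasDerivWithinAt (fun y => ∫ z in a..y, ε z) (ε x) (Ici x) x := by
  have hIcc : Icc a b ∈ 𝓝[>] x := Icc_mem_nhdsGT_of_mem hx
  refine intervalIntegral.integral_hasDerivWithinAt_right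
    ((hε.mono ?_).intervalIntegrable) (t := Ioi x)
    ((hε.stronglyMeasurableAtFilter_nhdsWithin measurableSet_Icc x).filter_mono
      (nhdsWithin_le_of_mem hIcc))
    ((hε x (Ico_subset_Icc_self hx)).mono_of_mem_nhdsWithin hIcc)
  rw [uIcc_of_le hx.1]
  exact Icc_subset_Icc_right hx.2.le

theorem norm_le_add_integral_mul_exp_of_pos (hK : 0 ≤ K)
    (hf : ContinuousOn f (Icc a b)) (hf' : ∀ x ∈ Ico a b, HasDerivWithinAt f (f' x) (Ici x) x)
    (hε : ContinuousOn ε (Icc a b)) (hε₀ : ∀ x ∈ Icc a b, 0 ≤ ε x) (ha : ‖f a‖ ≤ δ)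
    (bound : ∀ x ∈ Ico a b, ‖f' x‖ ≤ K * ‖f x‖ + ε x) {η : ℝ} (hη : 0 < η) :
    ∀ x ∈ Icc a b,
      ‖f x‖ ≤ (δ + η + ∫ y in a..x, ε y) * exp ((K + η) * (x - a)) := by
  set I : ℝ → ℝ := fun x => ∫ y in a..x, ε y
  have hI₀ : ∀ x ∈ Icc a b, 0 ≤ I x := fun x hx =>
    intervalIntegral.integral_nonneg hx.1 fun y hy => hε₀ y ⟨hy.1, hy.2.trans hx.2⟩
  have hIcont : ContinuousOn I (Icc a b) :=
    (intervalIntegral.continuousOn_primitive hε.integrableOn_Icc).congr fun x hx =>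
      intervalIntegral.integral_of_le hx.1
  refine image_norm_le_of_norm_deriv_right_lt_deriv_boundary' hf hf'
    (by simpa [I] using ha.trans (le_add_of_nonneg_right hη.le))
    ((continuousOn_const.add hIcont).mul (by fun_prop))
    (fun x hx => ((hasDerivWithinAt_intervalIntegral_Ici_of_continuousOn hε hx).const_add
      (δ + η)).mul (((hasDerivWithinAt_id x _).sub_const a).const_mul (K + η)).exp) ?_
  intro x hx hfx
  have hx' := Ico_subset_Icc_self hx
  have hexp : 1 ≤ exp ((K + η) * (x - a)) :=
    one_le_exp (mul_nonneg (by positivity) (sub_nonneg.2 hx.1))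
  have hεexp : ε x ≤ ε x * exp ((K + η) * (x - a)) := le_mul_of_one_le_right (hε₀ x hx') hexp
  have hB : 0 < δ + η + I x := by linarith [(norm_nonneg _).trans ha, hI₀ x hx']
  have hηB : 0 < η * ((δ + η + I x) * exp ((K + η) * (x - a))) := by positivity
  calc ‖f' x‖ ≤ K * ‖f x‖ + ε x := bound x hx
    _ < _ := by
      rw [hfx]
      simp only [id, mul_one]
      linarith

theorem norm_le_add_integral_mul_exp (hK : 0 ≤ K)
    (hf : ContinuousOn f (Icc a b)) (hf' : ∀ x ∈ Ico a b, HasDerivWithinAt f (f' x) (Ici x) x)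
    (hε : ContinuousOn ε (Icc a b)) (hε₀ : ∀ x ∈ Icc a b, 0 ≤ ε x) (ha : ‖f a‖ ≤ δ)
    (bound : ∀ x ∈ Ico a b, ‖f' x‖ ≤ K * ‖f x‖ + ε x) :
    ∀ x ∈ Icc a b, ‖f x‖ ≤ (δ + ∫ y in a..x, ε y) * exp (K * (x - a)) := by
  intro x hx
  have hlim : Tendsto (fun η => (δ + η + ∫ y in a..x, ε y) * exp ((K + η) * (x - a)))
      (𝓝[>] 0) (𝓝 ((δ + 0 + ∫ y in a..x, ε y) * exp ((K + 0) * (x - a)))) :=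
    ((by fun_prop : Continuous _).tendsto 0).mono_left nhdsWithin_le_nhds
  simpa using ge_of_tendsto hlim <| eventually_nhdsWithin_of_forall fun η hη =>
    norm_le_add_integral_mul_exp_of_pos hK hf hf' hε hε₀ ha bound hη x hx

theorem norm_le_add_integral_mul_exp_of_right_endpoint (hK : 0 ≤ K)
    (hf' : ∀ x ∈ Icc a b, HasDerivWithinAt f (f' x) (Icc a b) x)
    (hε : ContinuousOn ε (Icc a b)) (hε₀ : ∀ x ∈ Icc a b, 0 ≤ ε x) (hb : ‖f b‖ ≤ δ)
    (bound : ∀ x ∈ Icc a b, ‖f' x‖ ≤ K * ‖f x‖ + ε x) :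
    ∀ x ∈ Icc a b, ‖f x‖ ≤ (δ + ∫ y in x..b, ε y) * exp (K * (b - x)) := by
  have hneg : MapsTo (fun r : ℝ => -r) (Icc (-b) (-a)) (Icc a b) := fun r hr =>
    ⟨by linarith [hr.2], by linarith [hr.1]⟩
  have hg' : ∀ r ∈ Icc (-b) (-a),
      HasDerivWithinAt (fun r => f (-r)) (-f' (-r)) (Icc (-b) (-a)) r := fun r hr => by
    simpa [Function.comp_def] using (hf' (-r) (hneg hr)).scomp r (hasDerivWithinAt_neg r _) hneg
  intro x hx
  have hforward := norm_le_add_integral_mul_exp hK (fun r hr => (hg' r hr).continuousWithinAt)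
    (fun r hr => (hg' r (Ico_subset_Icc_self hr)).mono_of_mem_nhdsWithin
      (Icc_mem_nhdsGE_of_mem hr))
    (hε.comp continuousOn_neg hneg) (fun r hr => hε₀ _ (hneg hr)) (by simpa using hb)
    (fun r hr => by simpa using bound _ (hneg (Ico_subset_Icc_self hr)))
    (-x) ⟨by linarith [hx.2], by linarith [hx.1]⟩
  simpa [intervalIntegral.integral_comp_neg fun y => ε y, sub_eq_neg_add, add_comm] using hforward

end Gronwall

section SupNorm

variable {X Y E : Type*} [NormedAddCommGroup E] {G : X × Y → E} {B : ℝ}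

theorem norm_le_iSup_norm (hB : ∀ p, ‖G p‖ ≤ B) (x : X) (y : Y) :
    ‖G (x, y)‖ ≤ ⨆ y', ‖G (x, y')‖ :=
  le_ciSup ⟨B, forall_mem_range.2 fun y' => hB (x, y')⟩ y

theorem lowerSemicontinuous_iSup_norm [TopologicalSpace X] [TopologicalSpace Y]
    (hG : Continuous G) (hB : ∀ p, ‖G p‖ ≤ B) :
    LowerSemicontinuous fun x => ⨆ y, ‖G (x, y)‖ :=
  lowerSemicontinuous_ciSup (fun x => ⟨B, forall_mem_range.2 fun y => hB (x, y)⟩)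
    fun _ => (hG.comp (continuous_id.prodMk continuous_const)).norm.lowerSemicontinuous

theorem intervalIntegrable_iSup_norm [TopologicalSpace Y] {G : ℝ × Y → E} (hG : Continuous G)
    (hB : ∀ p, ‖G p‖ ≤ B) (a c : ℝ) :
    IntervalIntegrable (fun σ => ⨆ y, ‖G (σ, y)‖) MeasureTheory.volume a c := by
  refine (intervalIntegrable_iff.2 <| MeasureTheory.IntegrableOn.of_bound measure_Ioc_lt_top
    (lowerSemicontinuous_iSup_norm hG hB).measurable.aestronglyMeasurable |B| <|
    MeasureTheory.ae_of_all _ fun σ => ?_)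
  rw [Real.norm_of_nonneg (Real.iSup_nonneg fun y => norm_nonneg _)]
  exact Real.iSup_le (fun y => (hB _).trans (le_abs_self B)) (abs_nonneg B)

end SupNorm

theorem norm_drift_sub_drift_le {E V W : Type*} [SeminormedAddCommGroup E]
    [SeminormedAddCommGroup V] [SeminormedAddCommGroup W] {b : W → V} {G₁ G₂ : E → W}
    {v : E → V} {Lb LG Lv : ℝ} (hLb : 0 ≤ Lb) (hb : ∀ w w', ‖b w - b w'‖ ≤ Lb * ‖w - w'‖)
    (hG₁ : ∀ y y', ‖G₁ y - G₁ y'‖ ≤ LG * ‖y - y'‖) (hv : ∀ y y', ‖v y - v y'‖ ≤ Lv * ‖y - y'‖)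
    (y₁ y₂ : E) :
    ‖(b (G₁ y₁) + v y₁) - (b (G₂ y₂) + v y₂)‖
      ≤ (Lb * LG + Lv) * ‖y₁ - y₂‖ + Lb * ‖G₁ y₂ - G₂ y₂‖ := by
  have hG : ‖G₁ y₁ - G₂ y₂‖ ≤ LG * ‖y₁ - y₂‖ + ‖G₁ y₂ - G₂ y₂‖ :=
    (norm_sub_le_norm_sub_add_norm_sub _ (G₁ y₂) _).trans (add_le_add_left (hG₁ _ _) _)
  calc ‖(b (G₁ y₁) + v y₁) - (b (G₂ y₂) + v y₂)‖
      ≤ ‖b (G₁ y₁) - b (G₂ y₂)‖ + ‖v y₁ - v y₂‖ := by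
        rw [add_sub_add_comm]; exact norm_add_le _ _
    _ ≤ Lb * (LG * ‖y₁ - y₂‖ + ‖G₁ y₂ - G₂ y₂‖) + Lv * ‖y₁ - y₂‖ :=
        add_le_add ((hb _ _).trans (mul_le_mul_of_nonneg_left hG hLb)) (hv _ _)
    _ = (Lb * LG + Lv) * ‖y₁ - y₂‖ + Lb * ‖G₁ y₂ - G₂ y₂‖ := by ring

theorem backward_characteristics_stability_general
    (b : E3 → E3) (F₁ F₂ u : ℝ × E3 → E3) (Lb LF Lu : ℝ)
    (hLb : 0 ≤ Lb) (hLF : 0 ≤ LF) (hLu : 0 ≤ Lu)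
    (hb : ∀ z z' : E3, ‖b z - b z'‖ ≤ Lb * ‖z - z'‖)
    (hF₁c : Continuous F₁) (hF₂c : Continuous F₂)
    (hF₁bdd : ∃ B : ℝ, ∀ p : ℝ × E3, ‖F₁ p‖ ≤ B)
    (hF₂bdd : ∃ B : ℝ, ∀ p : ℝ × E3, ‖F₂ p‖ ≤ B)
    (hF₁ : ∀ (σ : ℝ) (z z' : E3), ‖F₁ (σ, z) - F₁ (σ, z')‖ ≤ LF * ‖z - z'‖)
    (hu : ∀ (σ : ℝ) (z z' : E3), ‖u (σ, z) - u (σ, z')‖ ≤ Lu * ‖z - z'‖)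
    (s t : ℝ) (x : E3) (X₁ X₂ : ℝ → E3)
    (hX₁ : ∀ τ ∈ Set.Icc s t,
      HasDerivWithinAt X₁ (b (F₁ (τ, X₁ τ)) + u (τ, X₁ τ)) (Set.Icc s t) τ)
    (hX₂ : ∀ τ ∈ Set.Icc s t,
      HasDerivWithinAt X₂ (b (F₂ (τ, X₂ τ)) + u (τ, X₂ τ)) (Set.Icc s t) τ)
    (hX₁t : X₁ t = x) (hX₂t : X₂ t = x) :
    ∀ τ ∈ Set.Icc s t,
      ‖X₁ τ - X₂ τ‖
        ≤ (Lb * ∫ σ in τ..t, ⨆ z : E3, ‖F₁ (σ, z) - F₂ (σ, z)‖) *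
            Real.exp ((Lb * LF + Lu) * (t - τ)) := by
  obtain ⟨B₁, hB₁⟩ := hF₁bdd
  obtain ⟨B₂, hB₂⟩ := hF₂bdd
  have hB : ∀ p, ‖(F₁ - F₂) p‖ ≤ B₁ + B₂ := fun p =>
    (norm_sub_le _ _).trans (add_le_add (hB₁ p) (hB₂ p))
  have hX₂c : ContinuousOn X₂ (Icc s t) := fun τ hτ => (hX₂ τ hτ).continuousWithinAt
  have hε : ContinuousOn (fun σ => Lb * ‖F₁ (σ, X₂ σ) - F₂ (σ, X₂ σ)‖) (Icc s t) := by
    fun_prop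
  intro τ hτ
  have hK : 0 ≤ Lb * LF + Lu := by positivity
  have ht : ‖(X₁ - X₂) t‖ ≤ 0 := by simp [hX₁t, hX₂t]
  have hgronwall := norm_le_add_integral_mul_exp_of_right_endpoint (f := X₁ - X₂) hK
    (fun σ hσ => (hX₁ σ hσ).sub (hX₂ σ hσ)) hε (fun _ _ => by positivity) ht
    (fun σ _ => norm_drift_sub_drift_le (G₁ := fun z => F₁ (σ, z)) (G₂ := fun z => F₂ (σ, z))
      (v := fun z => u (σ, z)) hLb hb (hF₁ σ) (hu σ) (X₁ σ) (X₂ σ)) τ hτ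
  refine hgronwall.trans (mul_le_mul_of_nonneg_right ?_ (exp_pos _).le)
  rw [zero_add, ← intervalIntegral.integral_const_mul]
  exact intervalIntegral.integral_mono_on hτ.2
    ((hε.mono (Icc_subset_Icc_left hτ.1)).intervalIntegrable_of_Icc hτ.2)
    ((intervalIntegrable_iSup_norm (hF₁c.sub hF₂c) hB τ t).const_mul Lb)
    fun σ _ => mul_le_mul_of_nonneg_left (norm_le_iSup_norm hB σ (X₂ σ)) hLb

/-- stability of backward characteristics with respect to the correlation
field. If `b` is `L_b`-Lipschitz, `F₁, F₂` are continuous, bounded and `L_F`-Lipschitz in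
the space variable, `u` is continuous and `L_u`-Lipschitz in the space variable, and
`X₁, X₂ : [s,t] → ℝ³` solve `X_i'(τ) = b(F_i(τ, X_i(τ))) + u(τ, X_i(τ))` with the same
endpoint `X₁(t) = X₂(t) = x`, then for every `τ ∈ [s,t]`:
`‖X₁(τ) − X₂(τ)‖ ≤ (L_b ∫_τ^t sup_z ‖F₁(σ,z) − F₂(σ,z)‖ dσ) exp((L_b L_F + L_u)(t − τ))`. -/
theorem backward_characteristics_stability
    (b : E3 → E3) (F₁ F₂ u : ℝ × E3 → E3) (Lb LF Lu : ℝ)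
    (hLb : 0 ≤ Lb) (hLF : 0 ≤ LF) (hLu : 0 ≤ Lu)
    (hb : ∀ z z' : E3, ‖b z - b z'‖ ≤ Lb * ‖z - z'‖)
    (hF₁c : Continuous F₁) (hF₂c : Continuous F₂)
    (hF₁bdd : ∃ B : ℝ, ∀ p : ℝ × E3, ‖F₁ p‖ ≤ B)
    (hF₂bdd : ∃ B : ℝ, ∀ p : ℝ × E3, ‖F₂ p‖ ≤ B)
    (hF₁ : ∀ (σ : ℝ) (z z' : E3), ‖F₁ (σ, z) - F₁ (σ, z')‖ ≤ LF * ‖z - z'‖)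
    (hF₂ : ∀ (σ : ℝ) (z z' : E3), ‖F₂ (σ, z) - F₂ (σ, z')‖ ≤ LF * ‖z - z'‖)
    (huc : Continuous u)
    (hu : ∀ (σ : ℝ) (z z' : E3), ‖u (σ, z) - u (σ, z')‖ ≤ Lu * ‖z - z'‖)
    (s t : ℝ) (hst : s < t) (x : E3) (X₁ X₂ : ℝ → E3)
    (hX₁ : ∀ τ ∈ Set.Icc s t,
      HasDerivWithinAt X₁ (b (F₁ (τ, X₁ τ)) + u (τ, X₁ τ)) (Set.Icc s t) τ)
    (hX₂ : ∀ τ ∈ Set.Icc s t,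
      HasDerivWithinAt X₂ (b (F₂ (τ, X₂ τ)) + u (τ, X₂ τ)) (Set.Icc s t) τ)
    (hX₁t : X₁ t = x) (hX₂t : X₂ t = x) :
    ∀ τ ∈ Set.Icc s t,
      ‖X₁ τ - X₂ τ‖
        ≤ (Lb * ∫ σ in τ..t, ⨆ z : E3, ‖F₁ (σ, z) - F₂ (σ, z)‖) *
            Real.exp ((Lb * LF + Lu) * (t - τ)) :=
  backward_characteristics_stability_general b F₁ F₂ u Lb LF Lu hLb hLF hLu hb hF₁c hF₂c hF₁bdd
    hF₂bdd hF₁ hu s t x X₁ X₂ hX₁ hX₂ hX₁t hX₂t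
end
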